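/- In the independent lognormal futures model, the quanto option price C(x,y) = ∫∫ g(F^E(x,u))·h(F^I(y,v)) dμ(u,v) has a mixed second partial derivative in the two initial prices (the cross-gamma Δ_{EI} = ∂²C/∂x∂y) at every x > 0, y > 0, given by the product-weight formula Δ_{EI} = ∫∫ g(F^E(x,u))·h(F^I(y,v)) · (u·v)/(x·y·σ_E·σ_I·T²) dμ(u,v), i.e. the Malliavin weight is π^{Δ_{EI}}(u,v) = π^{Δ_E}(u)·π^{Δ_I}(v) = u·v/(x y σ_E σ_I T²). -/

import Mathlib

/-!
By Fubini the price factorises as `C(x, y) = G(x) · H(y)`, so its cross derivative is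
`G'(x) · H'(y)` and it suffices to compute the delta of a single lognormal price
`G(x) = ∫ g(x e^{σu - c}) dγ_T(u)`. Writing `x = e^{σa}` turns the dependence on `x` into a
translation of the Gaussian variable, and by the Cameron–Martin formula
`∫ f(u + a) dγ_T(u) = ∫ f(u) e^{au/T - a²/(2T)} dγ_T(u)` the translation moves onto a smooth
density. Differentiating under the integral sign (dominated by `e^{k|u|}`, which is
`γ_T`-integrable) gives the score weight `u / T`, and the chain rule through `a = log x / σ`
gives `u / (x σ T)`.
-/

open MeasureTheory ProbabilityTheory Real
open scoped NNReal

section CameronMartin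

variable {μ : ℝ} {v : ℝ≥0}

noncomputable def cameronMartinDensity (v : ℝ≥0) (a u : ℝ) : ℝ :=
  exp (a * u / v - a ^ 2 / (2 * v))

lemma gaussianPDFReal_eq_mul_cameronMartinDensity (a u : ℝ) :
    gaussianPDFReal a v u = gaussianPDFReal 0 v u * cameronMartinDensity v a u := by
  rw [gaussianPDFReal, gaussianPDFReal, cameronMartinDensity, mul_assoc (_)⁻¹, ← exp_add]
  congr 2
  ring

lemma integral_comp_add_gaussianReal (hv : v ≠ 0) (f : ℝ → ℝ) (a : ℝ) :
    ∫ u, f (u + a) ∂gaussianReal 0 v =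
      ∫ u, f u * cameronMartinDensity v a u ∂gaussianReal 0 v := by
  have hmap : (gaussianReal 0 v).map (MeasurableEquiv.addRight a) = gaussianReal a v := by
    simpa using gaussianReal_map_add_const (μ := 0) (v := v) a
  calc ∫ u, f (u + a) ∂gaussianReal 0 v = ∫ u, f u ∂gaussianReal a v := by
        rw [← hmap, integral_map_equiv]
        rfl
    _ = ∫ u, f u * cameronMartinDensity v a u ∂gaussianReal 0 v := by
        rw [integral_gaussianReal_eq_integral_smul hv, integral_gaussianReal_eq_integral_smul hv]
        congr 1 with u
        rw [gaussianPDFReal_eq_mul_cameronMartinDensity a, smul_eq_mul, smul_eq_mul]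
        ring

lemma cameronMartinDensity_pos (a u : ℝ) : 0 < cameronMartinDensity v a u :=
  exp_pos _

lemma cameronMartinDensity_le {a R : ℝ} (ha : |a| ≤ R) (u : ℝ) :
    cameronMartinDensity v a u ≤ exp (R / v * |u|) := by
  rw [cameronMartinDensity]
  gcongr
  have : a * u ≤ R * |u| := (le_abs_self _).trans <| by
    rw [abs_mul]
    gcongr
  calc a * u / v - a ^ 2 / (2 * v) ≤ a * u / v := by
        have : 0 ≤ a ^ 2 / (2 * v) := by positivity
        linarith
    _ ≤ R * |u| / v := by gcongr
    _ = R / v * |u| := by ring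

lemma hasDerivAt_cameronMartinDensity (u a : ℝ) :
    HasDerivAt (fun a ↦ cameronMartinDensity v a u)
      (cameronMartinDensity v a u * ((u - a) / v)) a := by
  have h : HasDerivAt (fun a ↦ a * u / v - a ^ 2 / (2 * v)) ((u - a) / v) a :=
    ((((hasDerivAt_id' a).mul_const u).div_const (v : ℝ)).fun_sub
      ((hasDerivAt_pow 2 a).div_const (2 * (v : ℝ)))).congr_deriv (by ring)
  exact h.exp

lemma integrable_exp_mul_abs_gaussianReal (t : ℝ) :
    Integrable (fun u ↦ exp (t * |u|)) (gaussianReal μ v) :=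
  integrable_exp_mul_abs (X := id) (integrable_exp_mul_gaussianReal t)
    (integrable_exp_mul_gaussianReal (-t))

lemma abs_mul_cameronMartinDensity_le {f : ℝ → ℝ} {K b : ℝ}
    (hfb : ∀ u, |f u| ≤ K * exp (b * |u|)) {a R : ℝ} (ha : |a| ≤ R) (u : ℝ) :
    |f u| * cameronMartinDensity v a u ≤ K * exp ((b + R / v) * |u|) := by
  have hK : 0 ≤ K := by simpa using (abs_nonneg _).trans (hfb 0)
  rw [add_mul, exp_add, ← mul_assoc]
  exact mul_le_mul (hfb u) (cameronMartinDensity_le ha u) (cameronMartinDensity_pos a u).le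
    (by positivity)

theorem hasDerivAt_integral_mul_cameronMartinDensity (hv : v ≠ 0) {f : ℝ → ℝ}
    (hf : AEStronglyMeasurable f (gaussianReal 0 v)) {K b : ℝ}
    (hfb : ∀ u, |f u| ≤ K * exp (b * |u|)) (a₀ : ℝ) :
    HasDerivAt (fun a ↦ ∫ u, f u * cameronMartinDensity v a u ∂gaussianReal 0 v)
      (∫ u, f u * (cameronMartinDensity v a₀ u * ((u - a₀) / v)) ∂gaussianReal 0 v) a₀ := by
  have hv' : (0 : ℝ) < v := by positivity
  obtain ⟨R, hR₀⟩ : ∃ R, R = |a₀| + 1 := ⟨_, rfl⟩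
  have hR : ∀ a ∈ Metric.ball a₀ 1, |a| ≤ R := fun a ha ↦ by
    rw [Metric.mem_ball, dist_eq_norm] at ha
    linarith [abs_sub_abs_le_abs_sub a a₀, norm_eq_abs (a - a₀)]
  have hmeas : ∀ a, AEStronglyMeasurable (fun u ↦ f u * cameronMartinDensity v a u)
      (gaussianReal 0 v) :=
    fun a ↦ hf.mul (by unfold cameronMartinDensity; fun_prop)
  have hint : Integrable (fun u ↦ f u * cameronMartinDensity v a₀ u) (gaussianReal 0 v) := by
    refine ((integrable_exp_mul_abs_gaussianReal (b + R / v)).const_mul K).mono'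
      (hmeas a₀) (ae_of_all _ fun u ↦ ?_)
    rw [norm_mul, norm_eq_abs, norm_of_nonneg (cameronMartinDensity_pos a₀ u).le]
    exact abs_mul_cameronMartinDensity_le hfb (by simp [hR₀]) u
  have hbound : ∀ u, ∀ a ∈ Metric.ball a₀ 1,
      ‖f u * (cameronMartinDensity v a u * ((u - a) / v))‖ ≤
        K * exp R / v * exp ((b + R / v + 1) * |u|) := by
    intro u a ha
    have hfρ := abs_mul_cameronMartinDensity_le (v := v) hfb (hR a ha) u
    have hua : |u - a| / v ≤ exp R * exp |u| / v := by
      rw [← exp_add]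
      gcongr
      linarith [abs_sub u a, hR a ha, add_one_le_exp (R + |u|)]
    rw [norm_mul, norm_mul, norm_eq_abs, norm_of_nonneg (cameronMartinDensity_pos a u).le,
      norm_div, norm_eq_abs, norm_of_nonneg hv'.le, ← mul_assoc]
    calc |f u| * cameronMartinDensity v a u * (|u - a| / v)
        ≤ K * exp ((b + R / v) * |u|) * (exp R * exp |u| / v) :=
          mul_le_mul hfρ hua (by positivity)
            ((mul_nonneg (abs_nonneg _) (cameronMartinDensity_pos a u).le).trans hfρ)
      _ = K * exp R / v * exp ((b + R / v + 1) * |u|) := by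
          rw [add_mul _ 1, one_mul, exp_add]
          ring
  exact (hasDerivAt_integral_of_dominated_loc_of_deriv_le (Metric.ball_mem_nhds a₀ one_pos)
    (.of_forall hmeas) hint (hf.mul (by unfold cameronMartinDensity; fun_prop))
    (ae_of_all _ hbound) ((integrable_exp_mul_abs_gaussianReal _).const_mul _)
    (ae_of_all _ fun u a _ ↦ (hasDerivAt_cameronMartinDensity u a).const_mul (f u))).2

theorem hasDerivAt_integral_comp_add_gaussianReal (hv : v ≠ 0) {f : ℝ → ℝ}
    (hf : AEStronglyMeasurable f (gaussianReal 0 v)) {K b : ℝ}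
    (hfb : ∀ u, |f u| ≤ K * exp (b * |u|)) (a₀ : ℝ) :
    HasDerivAt (fun a ↦ ∫ u, f (u + a) ∂gaussianReal 0 v)
      (∫ u, f (u + a₀) * (u / v) ∂gaussianReal 0 v) a₀ := by
  have hweight := integral_comp_add_gaussianReal hv (fun w ↦ f w * ((w - a₀) / v)) a₀
  simp only [add_sub_cancel_right] at hweight
  simp only [integral_comp_add_gaussianReal hv f, hweight]
  convert hasDerivAt_integral_mul_cameronMartinDensity hv hf hfb a₀ using 3 with u
  ring

end CameronMartin

lemma abs_comp_exp_affine_le {g : ℝ → ℝ} {C : ℝ} {p : ℕ}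
    (hgb : ∀ z, |g z| ≤ C * (1 + |z|) ^ p) (σ c u : ℝ) :
    |g (exp (σ * u - c))| ≤ C * 2 ^ p * exp (p * |c|) * exp (p * |σ| * |u|) := by
  have hC : 0 ≤ C := by simpa using (abs_nonneg _).trans (hgb 0)
  have hexp : exp (σ * u - c) ≤ exp (|c| + |σ| * |u|) := by
    gcongr
    linarith [neg_abs_le c, abs_mul σ u ▸ le_abs_self (σ * u)]
  calc |g (exp (σ * u - c))| ≤ C * (1 + |exp (σ * u - c)|) ^ p := hgb _
    _ ≤ C * (2 * exp (|c| + |σ| * |u|)) ^ p := by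
        gcongr
        rw [abs_exp]
        linarith [one_le_exp (by positivity : 0 ≤ |c| + |σ| * |u|)]
    _ = C * 2 ^ p * exp (p * |c|) * exp (p * |σ| * |u|) := by
        rw [mul_pow, ← exp_nat_mul, mul_add, exp_add]
        ring_nf

theorem hasDerivAt_integral_comp_mul_exp_gaussianReal {T σ : ℝ} (hT : 0 < T) (hσ : σ ≠ 0)
    {g : ℝ → ℝ} (hg : Measurable g) {C : ℝ} {p : ℕ}
    (hgb : ∀ z, |g z| ≤ C * (1 + |z|) ^ p) (c : ℝ) {x : ℝ} (hx : 0 < x) :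
    HasDerivAt (fun x' ↦ ∫ u, g (x' * exp (σ * u - c)) ∂gaussianReal 0 T.toNNReal)
      (∫ u, g (x * exp (σ * u - c)) * (u / (x * σ * T)) ∂gaussianReal 0 T.toNNReal) x := by
  have hT' : T.toNNReal ≠ 0 := by simpa using hT
  have hshift : ∀ x' > 0, ∀ u, x' * exp (σ * u - c) = exp (σ * (u + log x' / σ) - c) := by
    intro x' hx' u
    rw [mul_add, mul_div_cancel₀ _ hσ, add_comm, add_sub_assoc, exp_add, exp_log hx']
  have hderiv := (hasDerivAt_integral_comp_add_gaussianReal hT'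
    (f := fun u ↦ g (exp (σ * u - c))) (hg.comp (by fun_prop)).aestronglyMeasurable
    (abs_comp_exp_affine_le hgb σ c) (log x / σ)).comp x
    ((hasDerivAt_log hx.ne').div_const σ)
  refine (hderiv.congr_of_eventuallyEq ?_).congr_deriv ?_
  · filter_upwards [eventually_gt_nhds hx] with x' hx'
    simp only [Function.comp_apply, hshift x' hx']
  · rw [← integral_mul_const]
    congr 1 with u
    rw [hshift x hx, Real.coe_toNNReal _ hT.le]
    field_simp

theorem cross_gamma_independent_general
    (T σE σI : ℝ) (hT : 0 < T) (hσE : 0 < σE) (hσI : 0 < σI)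
    (g h : ℝ → ℝ) (hg : Measurable g) (hh : Measurable h)
    (C : ℝ) (p : ℕ)
    (hgb : ∀ z : ℝ, |g z| ≤ C * (1 + |z|) ^ p)
    (hhb : ∀ z : ℝ, |h z| ≤ C * (1 + |z|) ^ p)
    (x y : ℝ) (hx : 0 < x) (hy : 0 < y) :
    (∀ y' : ℝ, 0 < y' →
      DifferentiableAt ℝ
        (fun x' : ℝ =>
          ∫ w : ℝ × ℝ,
            g (x' * Real.exp (σE * w.1 - σE ^ 2 * T / 2)) *
              h (y' * Real.exp (σI * w.2 - σI ^ 2 * T / 2))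
            ∂((gaussianReal 0 T.toNNReal).prod (gaussianReal 0 T.toNNReal))) x) ∧
    HasDerivAt
      (fun y' : ℝ =>
        deriv
          (fun x' : ℝ =>
            ∫ w : ℝ × ℝ,
              g (x' * Real.exp (σE * w.1 - σE ^ 2 * T / 2)) *
                h (y' * Real.exp (σI * w.2 - σI ^ 2 * T / 2))
              ∂((gaussianReal 0 T.toNNReal).prod (gaussianReal 0 T.toNNReal))) x)
      (∫ w : ℝ × ℝ,
          g (x * Real.exp (σE * w.1 - σE ^ 2 * T / 2)) *
            h (y * Real.exp (σI * w.2 - σI ^ 2 * T / 2)) *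
            (w.1 * w.2 / (x * y * σE * σI * T ^ 2))
        ∂((gaussianReal 0 T.toNNReal).prod (gaussianReal 0 T.toNNReal)))
      y := by
  set ν := gaussianReal 0 T.toNNReal
  have hE := hasDerivAt_integral_comp_mul_exp_gaussianReal hT hσE.ne' hg hgb (σE ^ 2 * T / 2) hx
  have hI := hasDerivAt_integral_comp_mul_exp_gaussianReal hT hσI.ne' hh hhb (σI ^ 2 * T / 2) hy
  have hfactor : ∀ x' y' : ℝ,
      ∫ w : ℝ × ℝ, g (x' * exp (σE * w.1 - σE ^ 2 * T / 2)) *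
        h (y' * exp (σI * w.2 - σI ^ 2 * T / 2)) ∂ν.prod ν =
      (∫ u, g (x' * exp (σE * u - σE ^ 2 * T / 2)) ∂ν) *
        ∫ v, h (y' * exp (σI * v - σI ^ 2 * T / 2)) ∂ν := by
    intro x' y'
    rw [← integral_prod_mul (L := ℝ)]
  have hweighted :
      ∫ w : ℝ × ℝ, g (x * exp (σE * w.1 - σE ^ 2 * T / 2)) *
        h (y * exp (σI * w.2 - σI ^ 2 * T / 2)) * (w.1 * w.2 / (x * y * σE * σI * T ^ 2))
        ∂ν.prod ν =
      (∫ u, g (x * exp (σE * u - σE ^ 2 * T / 2)) * (u / (x * σE * T)) ∂ν) *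
        ∫ v, h (y * exp (σI * v - σI ^ 2 * T / 2)) * (v / (y * σI * T)) ∂ν := by
    rw [← integral_prod_mul (L := ℝ)]
    congr 1 with w
    field_simp
  have hderivE : ∀ c,
      deriv (fun x' ↦ (∫ u, g (x' * exp (σE * u - σE ^ 2 * T / 2)) ∂ν) * c) x =
      (∫ u, g (x * exp (σE * u - σE ^ 2 * T / 2)) * (u / (x * σE * T)) ∂ν) * c :=
    fun c ↦ (hE.mul_const c).deriv
  simp only [hfactor, hweighted, hderivE]
  exact ⟨fun _ _ ↦ hE.differentiableAt.mul_const _, hI.const_mul _⟩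

/-- **Cross-gamma in the independent lognormal futures model.**
The quanto option price `C(x,y) = ∫∫ g(Fᴱ(x,u)) h(Fᴵ(y,v)) dμ(u,v)` has a mixed second
partial derivative `∂²C/∂x∂y` at every `x > 0`, `y > 0`: for each fixed `y' > 0` the map
`x ↦ C(x,y')` is differentiable at `x`, and `y' ↦ ∂C/∂x(x,y')` is differentiable at `y`
with derivative given by the product Malliavin weight `u·v / (x y σ_E σ_I T²)`. -/
theorem cross_gamma_independent
    (T σE σI : ℝ) (hT : 0 < T) (hσE : 0 < σE) (hσI : 0 < σI)
    (g h : ℝ → ℝ) (hg : Measurable g) (hh : Measurable h)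
    (C : ℝ) (p : ℕ) (hC : 0 ≤ C)
    (hgb : ∀ z : ℝ, |g z| ≤ C * (1 + |z|) ^ p)
    (hhb : ∀ z : ℝ, |h z| ≤ C * (1 + |z|) ^ p)
    (x y : ℝ) (hx : 0 < x) (hy : 0 < y) :
    (∀ y' : ℝ, 0 < y' →
      DifferentiableAt ℝ
        (fun x' : ℝ =>
          ∫ w : ℝ × ℝ,
            g (x' * Real.exp (σE * w.1 - σE ^ 2 * T / 2)) *
              h (y' * Real.exp (σI * w.2 - σI ^ 2 * T / 2))
            ∂((gaussianReal 0 T.toNNReal).prod (gaussianReal 0 T.toNNReal))) x) ∧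
    HasDerivAt
      (fun y' : ℝ =>
        deriv
          (fun x' : ℝ =>
            ∫ w : ℝ × ℝ,
              g (x' * Real.exp (σE * w.1 - σE ^ 2 * T / 2)) *
                h (y' * Real.exp (σI * w.2 - σI ^ 2 * T / 2))
              ∂((gaussianReal 0 T.toNNReal).prod (gaussianReal 0 T.toNNReal))) x)
      (∫ w : ℝ × ℝ,
          g (x * Real.exp (σE * w.1 - σE ^ 2 * T / 2)) *
            h (y * Real.exp (σI * w.2 - σI ^ 2 * T / 2)) *
            (w.1 * w.2 / (x * y * σE * σI * T ^ 2))
        ∂((gaussianReal 0 T.toNNReal).prod (gaussianReal 0 T.toNNReal)))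
      y :=
  cross_gamma_independent_general T σE σI hT hσE hσI g h hg hh C p hgb hhb x y hx hy
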